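/- arXiv:1208.2573 — 2 statements merged into one kernel-verified Lean document; each statement's English description precedes it below -/
import Mathlib

section
/- Let f : [a,b] → ℝ (a < b) be such that f′ is absolutely continuous on [a,b], f″ ∈ L¹[a,b], and |f″| is s-convex in the second sense on [a,b] for some fixed s ∈ (0,1]. If x ∈ [a, (a+b)/2] satisfies f′(x) = f′(a+b−x), then |(1/(b−a))∫_a^b f(t) dt − (1/2)[f(x)+f(a+b−x)]| ≤ ((x−a)³/((s+1)(s+2)(s+3)(b−a)))[|f″(a)| + |f″(b)|] + ((4(s²+3s+2)(x−a)³ + (s²+s+2)(a+b−2x)³)/(8(s+1)(s+2)(s+3)(b−a)))[|f″(x)| + |f″(a+b−x)|]. -/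
/-!
Split `[a, b]` at `x` and `a + b - x` and take the Peano kernel `K` equal to `(t - a)² / 2`,
`(t - (a + b) / 2)² / 2` and `(t - b)² / 2` on the three pieces. Integrating `K f''` by parts twice
on each piece gives `∫ f - (b - a) / 2 * (f x + f (a + b - x))`; the `f'` boundary terms at `x` and
`a + b - x` cancel because `f' x = f' (a + b - x)`. On each piece `[c, d]`, `s`-convexity bounds
`|f'' t|` by `((d - t) / (d - c)) ^ s * |f'' c| + ((t - c) / (d - c)) ^ s * |f'' d|`, and the
kernel moments of these two weights are explicit.
-/

open MeasureTheory

def SConvexOn (s : ℝ) (D : Set ℝ) (g : ℝ → ℝ) : Prop :=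
  ∀ x ∈ D, ∀ y ∈ D, ∀ α β : ℝ, 0 ≤ α → 0 ≤ β → α + β = 1 →
    g (α * x + β * y) ≤ α ^ s * g x + β ^ s * g y

theorem SConvexOn.le_of_mem_Icc {s : ℝ} {D : Set ℝ} {g : ℝ → ℝ} (hg : SConvexOn s D g)
    {c d t : ℝ} (hc : c ∈ D) (hd : d ∈ D) (hcd : c < d) (ht : t ∈ Set.Icc c d) :
    g t ≤ ((d - t) / (d - c)) ^ s * g c + ((t - c) / (d - c)) ^ s * g d := by
  have hdc : 0 < d - c := sub_pos.mpr hcd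
  have key := hg c hc d hd ((d - t) / (d - c)) ((t - c) / (d - c))
    (div_nonneg (by linarith [ht.2]) hdc.le) (div_nonneg (by linarith [ht.1]) hdc.le)
    (by field_simp; ring)
  rwa [show (d - t) / (d - c) * c + (t - c) / (d - c) * d = t by field_simp; ring] at key

theorem integral_sq_sub_mul_div_rpow (e r w : ℝ) (he : 0 < e) (hr : 0 < r) :
    ∫ u in (0 : ℝ)..e, (u - w) ^ 2 / 2 * (u / e) ^ r
      = (w ^ 2 * e / (r + 1) - 2 * w * e ^ 2 / (r + 2) + e ^ 3 / (r + 3)) / 2 := by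
  have her : 0 < e ^ r := Real.rpow_pos_of_pos he r
  have hexpand : Set.EqOn (fun u => (u - w) ^ 2 / 2 * (u / e) ^ r)
      (fun u => (w ^ 2 * u ^ r - 2 * w * u ^ (r + 1) + u ^ (r + 2)) / (2 * e ^ r))
      (Set.uIcc 0 e) := by
    intro u hu
    rw [Set.uIcc_of_le he.le] at hu
    rcases hu.1.eq_or_lt with rfl | hu0
    · simp [Real.zero_rpow hr.ne', Real.zero_rpow (show r + 1 ≠ 0 by positivity),
        Real.zero_rpow (show r + 2 ≠ 0 by positivity)]
    · simp only [Real.div_rpow hu.1 he.le, Real.rpow_add hu0, Real.rpow_one, Real.rpow_two]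
      field_simp
      ring
  have hint : ∀ k : ℕ, IntervalIntegrable (fun u : ℝ => u ^ (r + k)) volume 0 e :=
    fun k => intervalIntegral.intervalIntegrable_rpow' (by linarith [k.cast_nonneg (α := ℝ)])
  have hrpow : ∀ k : ℕ, ∫ u in (0 : ℝ)..e, u ^ (r + k) = e ^ r * e ^ (k + 1) / (r + k + 1) := by
    intro k
    rw [integral_rpow (Or.inl (by linarith [k.cast_nonneg (α := ℝ)])),
      Real.zero_rpow (by positivity), sub_zero, add_assoc, Real.rpow_add he, ← Nat.cast_succ,
      Real.rpow_natCast]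
  have hint0 : IntervalIntegrable (fun u : ℝ => u ^ r) volume 0 e := by simpa using hint 0
  have hint1 : IntervalIntegrable (fun u : ℝ => u ^ (r + 1)) volume 0 e := by simpa using hint 1
  have hint2 : IntervalIntegrable (fun u : ℝ => u ^ (r + 2)) volume 0 e := by simpa using hint 2
  have hrpow0 : ∫ u in (0 : ℝ)..e, u ^ r = e ^ r * e / (r + 1) := by simpa using hrpow 0
  have hrpow1 : ∫ u in (0 : ℝ)..e, u ^ (r + 1) = e ^ r * e ^ 2 / (r + 2) := by
    simpa [add_assoc, one_add_one_eq_two] using hrpow 1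
  have hrpow2 : ∫ u in (0 : ℝ)..e, u ^ (r + 2) = e ^ r * e ^ 3 / (r + 3) := by
    simpa [add_assoc, show (2 : ℝ) + 1 = 3 by norm_num] using hrpow 2
  rw [intervalIntegral.integral_congr hexpand, intervalIntegral.integral_div,
    intervalIntegral.integral_add ((hint0.const_mul _).sub (hint1.const_mul _)) hint2,
    intervalIntegral.integral_sub (hint0.const_mul _) (hint1.const_mul _),
    intervalIntegral.integral_const_mul, intervalIntegral.integral_const_mul,
    hrpow0, hrpow1, hrpow2]
  field_simp

theorem abs_integral_sq_mul_le {c d r P Q : ℝ} {g : ℝ → ℝ} (v : ℝ) (hcd : c < d) (hr : 0 < r)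
    (hg : IntervalIntegrable g volume c d)
    (hbound : ∀ t ∈ Set.Icc c d,
      |g t| ≤ ((d - t) / (d - c)) ^ r * P + ((t - c) / (d - c)) ^ r * Q) :
    |∫ t in c..d, (t - v) ^ 2 / 2 * g t|
      ≤ ((d - v) ^ 2 * (d - c) / (r + 1) - 2 * (d - v) * (d - c) ^ 2 / (r + 2)
            + (d - c) ^ 3 / (r + 3)) / 2 * P
        + ((v - c) ^ 2 * (d - c) / (r + 1) - 2 * (v - c) * (d - c) ^ 2 / (r + 2)
            + (d - c) ^ 3 / (r + 3)) / 2 * Q := by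
  have hdc : 0 < d - c := sub_pos.mpr hcd
  have hkernel : ContinuousOn (fun t : ℝ => (t - v) ^ 2 / 2) (Set.uIcc c d) := by fun_prop
  have hleft : IntervalIntegrable (fun t => (t - v) ^ 2 / 2 * ((d - t) / (d - c)) ^ r)
      volume c d := (hkernel.mul (((continuousOn_const.sub continuousOn_id).div_const _).rpow_const
        fun _ _ => Or.inr hr.le)).intervalIntegrable
  have hright : IntervalIntegrable (fun t => (t - v) ^ 2 / 2 * ((t - c) / (d - c)) ^ r)
      volume c d := (hkernel.mul (((continuousOn_id.sub continuousOn_const).div_const _).rpow_const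
        fun _ _ => Or.inr hr.le)).intervalIntegrable
  have hleft_int : ∫ t in c..d, (t - v) ^ 2 / 2 * ((d - t) / (d - c)) ^ r
      = ((d - v) ^ 2 * (d - c) / (r + 1) - 2 * (d - v) * (d - c) ^ 2 / (r + 2)
          + (d - c) ^ 3 / (r + 3)) / 2 := by
    have := intervalIntegral.integral_comp_sub_left
      (fun u => (u - (d - v)) ^ 2 / 2 * (u / (d - c)) ^ r) d (a := c) (b := d)
    simp only [sub_self, sub_sub_sub_cancel_left] at this
    rw [← integral_sq_sub_mul_div_rpow (d - c) r (d - v) hdc hr, ← this]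
    congr 1 with t
    ring_nf
  have hright_int : ∫ t in c..d, (t - v) ^ 2 / 2 * ((t - c) / (d - c)) ^ r
      = ((v - c) ^ 2 * (d - c) / (r + 1) - 2 * (v - c) * (d - c) ^ 2 / (r + 2)
          + (d - c) ^ 3 / (r + 3)) / 2 := by
    have := intervalIntegral.integral_comp_sub_right
      (fun u => (u - (v - c)) ^ 2 / 2 * (u / (d - c)) ^ r) c (a := c) (b := d)
    simp only [sub_self] at this
    rw [← integral_sq_sub_mul_div_rpow (d - c) r (v - c) hdc hr, ← this]
    congr 1 with t
    ring_nf
  calc |∫ t in c..d, (t - v) ^ 2 / 2 * g t|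
      ≤ ∫ t in c..d, |(t - v) ^ 2 / 2 * g t| :=
        intervalIntegral.abs_integral_le_integral_abs hcd.le
    _ ≤ ∫ t in c..d, ((t - v) ^ 2 / 2 * ((d - t) / (d - c)) ^ r * P
          + (t - v) ^ 2 / 2 * ((t - c) / (d - c)) ^ r * Q) := by
        refine intervalIntegral.integral_mono_on hcd.le (hg.continuousOn_mul hkernel).abs
          ((hleft.mul_const P).add (hright.mul_const Q)) fun t ht => ?_
        rw [abs_mul, abs_of_nonneg (by positivity), mul_assoc, mul_assoc, ← mul_add]
        exact mul_le_mul_of_nonneg_left (hbound t ht) (by positivity)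
    _ = _ := by
        rw [intervalIntegral.integral_add (hleft.mul_const P) (hright.mul_const Q),
          intervalIntegral.integral_mul_const, intervalIntegral.integral_mul_const,
          hleft_int, hright_int]

theorem SConvexOn.abs_integral_sq_mul_le {s : ℝ} {D : Set ℝ} {g : ℝ → ℝ}
    (hg : SConvexOn s D fun t => |g t|) (hs : 0 < s) {c d : ℝ} (v : ℝ) (hc : c ∈ D) (hd : d ∈ D)
    (hcd : c ≤ d) (hint : IntervalIntegrable g volume c d) :
    |∫ t in c..d, (t - v) ^ 2 / 2 * g t|
      ≤ ((d - v) ^ 2 * (d - c) / (s + 1) - 2 * (d - v) * (d - c) ^ 2 / (s + 2)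
            + (d - c) ^ 3 / (s + 3)) / 2 * |g c|
        + ((v - c) ^ 2 * (d - c) / (s + 1) - 2 * (v - c) * (d - c) ^ 2 / (s + 2)
            + (d - c) ^ 3 / (s + 3)) / 2 * |g d| := by
  rcases hcd.eq_or_lt with rfl | hcd
  · simp
  exact _root_.abs_integral_sq_mul_le v hcd hs hint fun t ht => hg.le_of_mem_Icc hc hd hcd ht

theorem integral_sq_sub_mul_deriv2_eq {f f' f'' : ℝ → ℝ} {c d : ℝ} (v : ℝ)
    (hf' : ∀ t ∈ Set.uIcc c d, HasDerivAt f (f' t) t)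
    (hf'' : ∀ t ∈ Set.uIcc c d, HasDerivAt f' (f'' t) t)
    (hint : IntervalIntegrable f'' volume c d) :
    ∫ t in c..d, (t - v) ^ 2 / 2 * f'' t
      = (∫ t in c..d, f t)
        + (((d - v) ^ 2 / 2 * f' d - (d - v) * f d)
          - ((c - v) ^ 2 / 2 * f' c - (c - v) * f c)) := by
  have hf_int : IntervalIntegrable f volume c d :=
    ContinuousOn.intervalIntegrable fun t ht => (hf' t ht).continuousAt.continuousWithinAt
  have hkernel_int : IntervalIntegrable (fun t => (t - v) ^ 2 / 2 * f'' t) volume c d :=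
    hint.continuousOn_mul (by fun_prop)
  have hantideriv : ∀ t ∈ Set.uIcc c d,
      HasDerivAt (fun t => (t - v) ^ 2 / 2 * f' t - (t - v) * f t)
        ((t - v) ^ 2 / 2 * f'' t - f t) t := by
    intro t ht
    have hsq : HasDerivAt (fun t : ℝ => (t - v) ^ 2 / 2) (t - v) t := by
      simpa using (((hasDerivAt_id t).sub_const v).pow 2).div_const 2
    exact ((hsq.mul (hf'' t ht)).sub
      (((hasDerivAt_id' t).sub_const v).mul (hf' t ht))).congr_deriv (by ring)
  rw [← intervalIntegral.integral_eq_sub_of_hasDerivAt hantideriv (hkernel_int.sub hf_int),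
    intervalIntegral.integral_sub hkernel_int hf_int]
  ring

theorem IntervalIntegrable.of_mem_Icc {g : ℝ → ℝ} {a b c d : ℝ}
    (hg : IntervalIntegrable g volume a b) (hc : c ∈ Set.Icc a b) (hd : d ∈ Set.Icc a b) :
    IntervalIntegrable g volume c d :=
  hg.mono_set (Set.uIcc_subset_uIcc (Set.Icc_subset_uIcc hc) (Set.Icc_subset_uIcc hd))

theorem integral_eq_peano_kernel_add {f f' f'' : ℝ → ℝ} {a b x : ℝ}
    (hf' : ∀ t ∈ Set.Icc a b, HasDerivAt f (f' t) t)
    (hf'' : ∀ t ∈ Set.Icc a b, HasDerivAt f' (f'' t) t)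
    (hint : IntervalIntegrable f'' volume a b)
    (hx : x ∈ Set.Icc a ((a + b) / 2)) (hfx : f' x = f' (a + b - x)) :
    ∫ t in a..b, f t
      = (∫ t in a..x, (t - a) ^ 2 / 2 * f'' t)
        + (∫ t in x..(a + b - x), (t - (a + b) / 2) ^ 2 / 2 * f'' t)
        + (∫ t in (a + b - x)..b, (t - b) ^ 2 / 2 * f'' t)
        + (b - a) / 2 * (f x + f (a + b - x)) := by
  obtain ⟨hax, hxm⟩ := hx
  have hab : a ≤ b := by linarith
  have haI : a ∈ Set.Icc a b := ⟨le_rfl, hab⟩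
  have hbI : b ∈ Set.Icc a b := ⟨hab, le_rfl⟩
  have hxI : x ∈ Set.Icc a b := ⟨hax, by linarith⟩
  have hyI : a + b - x ∈ Set.Icc a b := ⟨by linarith, by linarith⟩
  have piece : ∀ {c d : ℝ}, c ∈ Set.Icc a b → d ∈ Set.Icc a b → ∀ v : ℝ,
      ∫ t in c..d, (t - v) ^ 2 / 2 * f'' t
        = (∫ t in c..d, f t)
          + (((d - v) ^ 2 / 2 * f' d - (d - v) * f d) - ((c - v) ^ 2 / 2 * f' c - (c - v) * f c)) :=
    fun hc hd v => integral_sq_sub_mul_deriv2_eq v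
      (fun t ht => hf' t (Set.uIcc_subset_Icc hc hd ht))
      (fun t ht => hf'' t (Set.uIcc_subset_Icc hc hd ht))
      (hint.of_mem_Icc hc hd)
  have hf_int : ∀ {c d : ℝ}, c ∈ Set.Icc a b → d ∈ Set.Icc a b → IntervalIntegrable f volume c d :=
    fun hc hd => ContinuousOn.intervalIntegrable fun t ht =>
      (hf' t (Set.uIcc_subset_Icc hc hd ht)).continuousAt.continuousWithinAt
  rw [← intervalIntegral.integral_add_adjacent_intervals (hf_int haI hyI) (hf_int hyI hbI),
    ← intervalIntegral.integral_add_adjacent_intervals (hf_int haI hxI) (hf_int hxI hyI),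
    piece haI hxI, piece hxI hyI, piece hyI hbI]
  linear_combination ((x - (a + b) / 2) ^ 2 / 2 - (x - a) ^ 2 / 2) * hfx

theorem stmt2_general (a b : ℝ) (hab : a < b) (f f' f'' : ℝ → ℝ)
    (hf' : ∀ t ∈ Set.Icc a b, HasDerivAt f (f' t) t)
    (hf'' : ∀ t ∈ Set.Icc a b, HasDerivAt f' (f'' t) t)
    (hint : IntervalIntegrable f'' volume a b)
    (s : ℝ) (hs0 : 0 < s)
    (hconv : SConvexOn s (Set.Icc a b) (fun t => |f'' t|)) :
    ∀ x ∈ Set.Icc a ((a + b) / 2), f' x = f' (a + b - x) →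
      |((1 / (b - a)) * ∫ t in a..b, f t) - (1 / 2) * (f x + f (a + b - x))|
        ≤ (x - a) ^ 3 / ((s + 1) * (s + 2) * (s + 3) * (b - a)) * (|f'' a| + |f'' b|)
          + (4 * (s ^ 2 + 3 * s + 2) * (x - a) ^ 3 + (s ^ 2 + s + 2) * (a + b - 2 * x) ^ 3)
              / (8 * (s + 1) * (s + 2) * (s + 3) * (b - a)) * (|f'' x| + |f'' (a + b - x)|) := by
  intro x hx hfx
  have hxI : x ∈ Set.Icc a b := ⟨hx.1, by linarith [hx.2]⟩
  have hyI : a + b - x ∈ Set.Icc a b := ⟨by linarith [hx.2], by linarith [hx.1]⟩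
  have haI : a ∈ Set.Icc a b := ⟨le_rfl, hab.le⟩
  have hbI : b ∈ Set.Icc a b := ⟨hab.le, le_rfl⟩
  have hleft := hconv.abs_integral_sq_mul_le hs0 a haI hxI hx.1 (hint.of_mem_Icc haI hxI)
  have hmid := hconv.abs_integral_sq_mul_le hs0 ((a + b) / 2) hxI hyI (by linarith [hx.2])
    (hint.of_mem_Icc hxI hyI)
  have hright := hconv.abs_integral_sq_mul_le hs0 b hyI hbI hyI.2 (hint.of_mem_Icc hyI hbI)
  have hba : 0 < b - a := sub_pos.mpr hab
  rw [integral_eq_peano_kernel_add hf' hf'' hint hx hfx,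
    show ∀ S F : ℝ, 1 / (b - a) * (S + (b - a) / 2 * F) - 1 / 2 * F = S / (b - a) by
      intro S F; field_simp; ring,
    abs_div, abs_of_pos hba, div_le_iff₀ hba]
  refine (abs_add_three _ _ _).trans ((add_le_add_three hleft hmid hright).trans (le_of_eq ?_))
  field_simp
  ring

theorem stmt2 (a b : ℝ) (ha : 0 ≤ a) (hab : a < b) (f f' f'' : ℝ → ℝ)
    (hf' : ∀ t ∈ Set.Icc a b, HasDerivAt f (f' t) t)
    (hf'' : ∀ t ∈ Set.Icc a b, HasDerivAt f' (f'' t) t)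
    (hint : IntervalIntegrable f'' volume a b)
    (s : ℝ) (hs0 : 0 < s) (hs1 : s ≤ 1)
    (hconv : SConvexOn s (Set.Icc a b) (fun t => |f'' t|)) :
    ∀ x ∈ Set.Icc a ((a + b) / 2), f' x = f' (a + b - x) →
      |((1 / (b - a)) * ∫ t in a..b, f t) - (1 / 2) * (f x + f (a + b - x))|
        ≤ (x - a) ^ 3 / ((s + 1) * (s + 2) * (s + 3) * (b - a)) * (|f'' a| + |f'' b|)
          + (4 * (s ^ 2 + 3 * s + 2) * (x - a) ^ 3 + (s ^ 2 + s + 2) * (a + b - 2 * x) ^ 3)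
              / (8 * (s + 1) * (s + 2) * (s + 3) * (b - a)) * (|f'' x| + |f'' (a + b - x)|) :=
  stmt2_general a b hab f f' f'' hf' hf'' hint s hs0 hconv
end

section
/- Let f : [a,b] → ℝ (a < b) be such that f′ is absolutely continuous on [a,b], f″ ∈ L¹[a,b], and |f″|^q is s-convex in the second sense on [a,b] for some fixed s ∈ (0,1], where q > 1 and 1/p + 1/q = 1. Then |(1/(b−a))∫_a^b f(t) dt − (1/2)[f((3a+b)/4) + f((a+3b)/4)]| ≤ ((b−a)²/(128(2p+1)^{1/p}(s+1)^{1/q})){(|f″(a)|^q + |f″((3a+b)/4)|^q)^{1/q} + 2(|f″((3a+b)/4)|^q + |f″((a+3b)/4)|^q)^{1/q} + (|f″((a+3b)/4)|^q + |f″(b)|^q)^{1/q}}. -/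
/-!
Two integrations by parts against the Peano kernel of the two-point rule, namely
`(t - a)² / 2` on `[a, x₁]`, `(t - (a + b) / 2)² / 2` on `[x₁, x₂]` and `(t - b)² / 2` on
`[x₂, b]`, write the error of the rule as `∫ K f''`. On each of the three pieces Hölder's
inequality separates the kernel, whose `p`-th power integrates explicitly, from `|f''|`, and
the Hermite–Hadamard inequality for s-convex functions bounds `∫ |f''| ^ q` by the length of
the piece over `s + 1` times the sum of the endpoint values of `|f''| ^ q`.
-/

open MeasureTheory

open Set

theorem integral_sub_const_rpow (c d : ℝ) {r : ℝ} (hr : -1 < r) :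
    ∫ t in c..d, (t - c) ^ r = (d - c) ^ (r + 1) / (r + 1) := by
  rw [intervalIntegral.integral_comp_sub_right (· ^ r), integral_rpow (.inl hr), sub_self,
    Real.zero_rpow (by linarith), sub_zero]

theorem integral_const_sub_rpow (c d : ℝ) {r : ℝ} (hr : -1 < r) :
    ∫ t in c..d, (d - t) ^ r = (d - c) ^ (r + 1) / (r + 1) := by
  rw [intervalIntegral.integral_comp_sub_left (· ^ r), integral_rpow (.inl hr), sub_self,
    Real.zero_rpow (by linarith), sub_zero]

theorem integral_sq_div_two_rpow {c d w p : ℝ} (hp : 0 < p) (hw : w ∈ Icc c d) :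
    ∫ t in c..d, ((t - w) ^ 2 / 2) ^ p
      = ((w - c) ^ (2 * p + 1) + (d - w) ^ (2 * p + 1)) / (2 ^ p * (2 * p + 1)) := by
  have hsq : ∀ t, ((t - w) ^ 2 / 2) ^ p = |t - w| ^ (2 * p) / 2 ^ p := fun t => by
    rw [Real.div_rpow (by positivity) zero_le_two, ← sq_abs, ← Real.rpow_natCast,
      ← Real.rpow_mul (abs_nonneg _)]
    norm_num
  have hcont : Continuous fun t => |t - w| ^ (2 * p) / 2 ^ p := by
    fun_prop (disch := linarith)
  have hleft : ∫ t in c..w, |t - w| ^ (2 * p) / 2 ^ p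
      = (w - c) ^ (2 * p + 1) / (2 * p + 1) / 2 ^ p := by
    rw [intervalIntegral.integral_div, ← integral_const_sub_rpow c w (r := 2 * p) (by linarith)]
    refine congrArg (· / _) (intervalIntegral.integral_congr fun t ht => ?_)
    rw [uIcc_of_le hw.1] at ht
    simp only [abs_of_nonpos (sub_nonpos.2 ht.2), neg_sub]
  have hright : ∫ t in w..d, |t - w| ^ (2 * p) / 2 ^ p
      = (d - w) ^ (2 * p + 1) / (2 * p + 1) / 2 ^ p := by
    rw [intervalIntegral.integral_div, ← integral_sub_const_rpow w d (r := 2 * p) (by linarith)]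
    refine congrArg (· / _) (intervalIntegral.integral_congr fun t ht => ?_)
    rw [uIcc_of_le hw.2] at ht
    simp only [abs_of_nonneg (sub_nonneg.2 ht.1)]
  simp_rw [hsq]
  rw [← intervalIntegral.integral_add_adjacent_intervals (hcont.intervalIntegrable c w)
    (hcont.intervalIntegrable w d), hleft, hright]
  field_simp

namespace SConvexOn

variable {s : ℝ} {D : Set ℝ} {g : ℝ → ℝ} {c d t : ℝ}

theorem le_of_mem_Icc_s10 (hg : SConvexOn s D g) (hc : c ∈ D) (hd : d ∈ D) (hcd : c < d)
    (ht : t ∈ Icc c d) :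
    g t ≤ ((d - t) / (d - c)) ^ s * g c + ((t - c) / (d - c)) ^ s * g d := by
  have hL : 0 < d - c := sub_pos.2 hcd
  have h := hg c hc d hd ((d - t) / (d - c)) ((t - c) / (d - c))
    (div_nonneg (by linarith [ht.2]) hL.le) (div_nonneg (by linarith [ht.1]) hL.le)
    (by field_simp; ring)
  rwa [show (d - t) / (d - c) * c + (t - c) / (d - c) * d = t by field_simp; ring] at h

theorem le_add_of_mem_Icc (hg : SConvexOn s D g) (hs : 0 ≤ s) (hc : c ∈ D) (hd : d ∈ D)
    (hcd : c < d) (hgc : 0 ≤ g c) (hgd : 0 ≤ g d) (ht : t ∈ Icc c d) :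
    g t ≤ g c + g d := by
  have hL : 0 < d - c := sub_pos.2 hcd
  have hα : ((d - t) / (d - c)) ^ s ≤ 1 := Real.rpow_le_one
    (div_nonneg (by linarith [ht.2]) hL.le) (div_le_one_of_le₀ (by linarith [ht.1]) hL.le) hs
  have hβ : ((t - c) / (d - c)) ^ s ≤ 1 := Real.rpow_le_one
    (div_nonneg (by linarith [ht.1]) hL.le) (div_le_one_of_le₀ (by linarith [ht.2]) hL.le) hs
  calc g t ≤ ((d - t) / (d - c)) ^ s * g c + ((t - c) / (d - c)) ^ s * g d :=
        hg.le_of_mem_Icc_s10 hc hd hcd ht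
    _ ≤ g c + g d := add_le_add (mul_le_of_le_one_left hgc hα) (mul_le_of_le_one_left hgd hβ)

theorem integral_le (hg : SConvexOn s D g) (hs : 0 ≤ s) (hc : c ∈ D) (hd : d ∈ D)
    (hcd : c < d) (hint : IntervalIntegrable g volume c d) :
    ∫ t in c..d, g t ≤ (d - c) / (s + 1) * (g c + g d) := by
  have hL : 0 < d - c := sub_pos.2 hcd
  have hweight : ∀ {e : ℝ → ℝ}, (∀ t ∈ uIcc c d, 0 ≤ e t) →
      ∫ t in c..d, (e t / (d - c)) ^ s = (∫ t in c..d, e t ^ s) / (d - c) ^ s := fun he => by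
    rw [← intervalIntegral.integral_div]
    exact intervalIntegral.integral_congr fun t ht => Real.div_rpow (he t ht) hL.le s
  have hαint : ∫ t in c..d, ((d - t) / (d - c)) ^ s = (d - c) / (s + 1) := by
    rw [hweight fun t ht => ?_, integral_const_sub_rpow c d (by linarith),
      Real.rpow_add_one hL.ne']
    · field_simp
    · rw [uIcc_of_le hcd.le] at ht; linarith [ht.2]
  have hβint : ∫ t in c..d, ((t - c) / (d - c)) ^ s = (d - c) / (s + 1) := by
    rw [hweight fun t ht => ?_, integral_sub_const_rpow c d (by linarith),
      Real.rpow_add_one hL.ne']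
    · field_simp
    · rw [uIcc_of_le hcd.le] at ht; linarith [ht.1]
  have hcont : ∀ e : ℝ → ℝ, Continuous e →
      IntervalIntegrable (fun t => e t ^ s) volume c d :=
    fun e he => (he.rpow_const fun _ => .inr hs).intervalIntegrable c d
  calc ∫ t in c..d, g t
      ≤ ∫ t in c..d, (((d - t) / (d - c)) ^ s * g c + ((t - c) / (d - c)) ^ s * g d) :=
        intervalIntegral.integral_mono_on hcd.le hint
          (((hcont _ (by fun_prop)).mul_const _).add ((hcont _ (by fun_prop)).mul_const _))
          fun t ht => hg.le_of_mem_Icc_s10 hc hd hcd ht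
    _ = (d - c) / (s + 1) * (g c + g d) := by
        rw [intervalIntegral.integral_add ((hcont _ (by fun_prop)).mul_const _)
            ((hcont _ (by fun_prop)).mul_const _),
          intervalIntegral.integral_mul_const, intervalIntegral.integral_mul_const, hαint, hβint]
        ring

end SConvexOn

theorem intervalIntegral.integral_mul_le_Lp_mul_Lq_of_nonneg {c d p q : ℝ} (hcd : c ≤ d)
    (hpq : p.HolderConjugate q) {φ g : ℝ → ℝ} (hφ0 : ∀ t ∈ Ioc c d, 0 ≤ φ t)
    (hg0 : ∀ t ∈ Ioc c d, 0 ≤ g t)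
    (hφ : MemLp φ (ENNReal.ofReal p) (volume.restrict (Ioc c d)))
    (hg : MemLp g (ENNReal.ofReal q) (volume.restrict (Ioc c d))) :
    ∫ t in c..d, φ t * g t
      ≤ (∫ t in c..d, φ t ^ p) ^ (1 / p) * (∫ t in c..d, g t ^ q) ^ (1 / q) := by
  simp only [intervalIntegral.integral_of_le hcd]
  exact MeasureTheory.integral_mul_le_Lp_mul_Lq_of_nonneg hpq
    (ae_restrict_of_forall_mem measurableSet_Ioc hφ0)
    (ae_restrict_of_forall_mem measurableSet_Ioc hg0) hφ hg

theorem Real.HolderConjugate.rpow_mul_rpow_eq_mul_pow_three {p q k h : ℝ}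
    (hpq : p.HolderConjugate q) (hk : 0 ≤ k) (hh : 0 ≤ h) :
    (k * h ^ (2 * p + 1)) ^ (1 / p) * (k * h) ^ (1 / q) = k * h ^ 3 := by
  have hexp : (2 * p + 1) * (1 / p) + 1 / q = 2 + 1 := by
    rw [add_mul, one_mul, mul_assoc, mul_one_div_cancel hpq.ne_zero, add_assoc,
      hpq.one_div_add_one_div, div_one, mul_one]
  rw [Real.mul_rpow hk (by positivity), Real.mul_rpow hk hh, ← Real.rpow_mul hh,
    mul_mul_mul_comm, ← Real.rpow_add_of_nonneg hk hpq.one_div_nonneg hpq.symm.one_div_nonneg,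
    hpq.one_div_add_one_div, div_one, Real.rpow_one,
    ← Real.rpow_add_of_nonneg hh (mul_nonneg (by linarith [hpq.pos]) hpq.one_div_nonneg)
      hpq.symm.one_div_nonneg, hexp]
  norm_cast

theorem abs_integral_sq_div_two_mul_le {s p q c d w : ℝ} {D : Set ℝ} {g : ℝ → ℝ}
    (hpq : p.HolderConjugate q) (hs : 0 ≤ s) (hconv : SConvexOn s D fun t => |g t| ^ q)
    (hc : c ∈ D) (hd : d ∈ D) (hcd : c < d) (hw : w ∈ Icc c d)
    (hg : IntervalIntegrable g volume c d) :
    |∫ t in c..d, (t - w) ^ 2 / 2 * g t|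
      ≤ ((w - c) ^ (2 * p + 1) + (d - w) ^ (2 * p + 1)) ^ (1 / p) * (d - c) ^ (1 / q)
          / (2 * (2 * p + 1) ^ (1 / p) * (s + 1) ^ (1 / q))
          * (|g c| ^ q + |g d| ^ q) ^ (1 / q) := by
  have hp := hpq.pos
  have hq := hpq.symm.pos
  have hwc : 0 ≤ w - c := sub_nonneg.2 hw.1
  have hdw : 0 ≤ d - w := sub_nonneg.2 hw.2
  have hdc : 0 ≤ d - c := by linarith
  set S := |g c| ^ q + |g d| ^ q
  have hgS : ∀ t ∈ Icc c d, |g t| ≤ S ^ (1 / q) := fun t ht => by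
    rw [← Real.rpow_rpow_inv (abs_nonneg (g t)) hq.ne', ← one_div]
    exact Real.rpow_le_rpow (by positivity) (hconv.le_add_of_mem_Icc hs hc hd hcd
      (by positivity) (by positivity) ht) (by positivity)
  have hgLp : MemLp (fun t => |g t|) (ENNReal.ofReal q) (volume.restrict (Ioc c d)) :=
    .of_bound (continuous_abs.comp_aestronglyMeasurable hg.1.aestronglyMeasurable) _
      (ae_restrict_of_forall_mem measurableSet_Ioc fun t ht => by
        simpa using hgS t (Ioc_subset_Icc_self ht))
  have hkLp : MemLp (fun t => (t - w) ^ 2 / 2) (ENNReal.ofReal p) (volume.restrict (Ioc c d)) :=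
    .of_bound (Continuous.aestronglyMeasurable (by fun_prop)) ((d - c) ^ 2 / 2)
      (ae_restrict_of_forall_mem measurableSet_Ioc fun t ht => by
        rw [Real.norm_of_nonneg (by positivity)]
        nlinarith [ht.1, ht.2, hw.1, hw.2])
  have hgq : ∫ t in c..d, |g t| ^ q ≤ (d - c) / (s + 1) * S := by
    refine hconv.integral_le hs hc hd hcd
      ((intervalIntegrable_iff_integrableOn_Ioc_of_le hcd.le).2 ?_)
    have := hgLp.integrable_norm_rpow'
    simp only [Real.norm_eq_abs, abs_abs, ENNReal.toReal_ofReal hq.le] at this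
    exact this
  calc |∫ t in c..d, (t - w) ^ 2 / 2 * g t|
      ≤ ∫ t in c..d, (t - w) ^ 2 / 2 * |g t| := by
        refine (intervalIntegral.abs_integral_le_integral_abs hcd.le).trans_eq ?_
        simp only [abs_mul, abs_div, abs_sq, abs_two]
    _ ≤ (∫ t in c..d, ((t - w) ^ 2 / 2) ^ p) ^ (1 / p) * (∫ t in c..d, |g t| ^ q) ^ (1 / q) :=
        intervalIntegral.integral_mul_le_Lp_mul_Lq_of_nonneg hcd.le hpq
          (fun t _ => by positivity) (fun t _ => abs_nonneg _) hkLp hgLp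
    _ ≤ (((w - c) ^ (2 * p + 1) + (d - w) ^ (2 * p + 1)) / (2 ^ p * (2 * p + 1))) ^ (1 / p)
          * ((d - c) / (s + 1) * S) ^ (1 / q) := by
        rw [integral_sq_div_two_rpow hp hw]
        gcongr
        exact intervalIntegral.integral_nonneg hcd.le fun t _ => by positivity
    _ = _ := by
        rw [Real.div_rpow (by positivity) (by positivity), Real.mul_rpow (by positivity)
          (by positivity), ← Real.rpow_mul zero_le_two, mul_one_div_cancel hp.ne', Real.rpow_one,
          Real.mul_rpow (by positivity) (by positivity), Real.div_rpow hdc (by positivity)]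
        field_simp

theorem integral_sq_div_two_mul_eq {f f' f'' : ℝ → ℝ} {c d : ℝ} (w : ℝ)
    (hf' : ∀ t ∈ uIcc c d, HasDerivAt f (f' t) t)
    (hf'' : ∀ t ∈ uIcc c d, HasDerivAt f' (f'' t) t)
    (hint : IntervalIntegrable f'' volume c d) :
    ∫ t in c..d, (t - w) ^ 2 / 2 * f'' t
      = (d - w) ^ 2 / 2 * f' d - (c - w) ^ 2 / 2 * f' c - ((d - w) * f d - (c - w) * f c)
        + ∫ t in c..d, f t := by
  have hkernel : ∀ t ∈ uIcc c d, HasDerivAt (fun t => (t - w) ^ 2 / 2) (t - w) t :=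
    fun t _ => by simpa using (((hasDerivAt_id t).sub_const w).pow 2).div_const 2
  have hlin : ∀ t ∈ uIcc c d, HasDerivAt (fun t => t - w) 1 t := fun t _ =>
    (hasDerivAt_id t).sub_const w
  have hf'int : IntervalIntegrable f' volume c d :=
    ContinuousOn.intervalIntegrable fun t ht => (hf'' t ht).continuousAt.continuousWithinAt
  rw [intervalIntegral.integral_mul_deriv_eq_deriv_mul hkernel hf''
      (Continuous.intervalIntegrable (by fun_prop) c d) hint,
    intervalIntegral.integral_mul_deriv_eq_deriv_mul hlin hf' intervalIntegrable_const hf'int]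
  simp only [one_mul]
  ring

theorem integral_sub_mul_midpoint_eq {f f' f'' : ℝ → ℝ} {c d : ℝ} (hcd : c ≤ d)
    (hf' : ∀ t ∈ Icc c d, HasDerivAt f (f' t) t)
    (hf'' : ∀ t ∈ Icc c d, HasDerivAt f' (f'' t) t)
    (hint : IntervalIntegrable f'' volume c d) :
    (∫ t in c..d, f t) - (d - c) * f ((c + d) / 2)
      = (∫ t in c..(c + d) / 2, (t - c) ^ 2 / 2 * f'' t)
        + ∫ t in (c + d) / 2..d, (t - d) ^ 2 / 2 * f'' t := by
  have hcm : c ≤ (c + d) / 2 := by linarith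
  have hmd : (c + d) / 2 ≤ d := by linarith
  have hleft : uIcc c ((c + d) / 2) ⊆ Icc c d := by
    rw [uIcc_of_le hcm]; exact Icc_subset_Icc_right hmd
  have hright : uIcc ((c + d) / 2) d ⊆ Icc c d := by
    rw [uIcc_of_le hmd]; exact Icc_subset_Icc_left hcm
  have hfcont : ContinuousOn f (Icc c d) := fun t ht => (hf' t ht).continuousAt.continuousWithinAt
  rw [integral_sq_div_two_mul_eq c (fun t ht => hf' t (hleft ht)) (fun t ht => hf'' t (hleft ht))
      (hint.mono_set (by rwa [uIcc_of_le hcd])),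
    integral_sq_div_two_mul_eq d (fun t ht => hf' t (hright ht)) (fun t ht => hf'' t (hright ht))
      (hint.mono_set (by rwa [uIcc_of_le hcd])),
    ← intervalIntegral.integral_add_adjacent_intervals (hfcont.mono hleft).intervalIntegrable
      (hfcont.mono hright).intervalIntegrable]
  ring

theorem integral_sub_two_point_eq {f f' f'' : ℝ → ℝ} {a b : ℝ} (hab : a ≤ b)
    (hf' : ∀ t ∈ Icc a b, HasDerivAt f (f' t) t)
    (hf'' : ∀ t ∈ Icc a b, HasDerivAt f' (f'' t) t)
    (hint : IntervalIntegrable f'' volume a b) :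
    (∫ t in a..b, f t) - (b - a) / 2 * (f ((3 * a + b) / 4) + f ((a + 3 * b) / 4))
      = (∫ t in a..(3 * a + b) / 4, (t - a) ^ 2 / 2 * f'' t)
        + (∫ t in (3 * a + b) / 4..(a + 3 * b) / 4, (t - (a + b) / 2) ^ 2 / 2 * f'' t)
        + ∫ t in (a + 3 * b) / 4..b, (t - b) ^ 2 / 2 * f'' t := by
  have ham : a ≤ (a + b) / 2 := by linarith
  have hmb : (a + b) / 2 ≤ b := by linarith
  have hleft : Icc a ((a + b) / 2) ⊆ Icc a b := Icc_subset_Icc_right hmb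
  have hright : Icc ((a + b) / 2) b ⊆ Icc a b := Icc_subset_Icc_left ham
  have hint' : ∀ {c d}, Icc c d ⊆ Icc a b → c ≤ d → IntervalIntegrable f'' volume c d :=
    fun hsub hcd => hint.mono_set (by rwa [uIcc_of_le hcd, uIcc_of_le hab])
  have hfcont : ContinuousOn f (Icc a b) := fun t ht => (hf' t ht).continuousAt.continuousWithinAt
  have hkernel : ∀ {c d}, Icc c d ⊆ Icc a b → c ≤ d →
      IntervalIntegrable (fun t => (t - (a + b) / 2) ^ 2 / 2 * f'' t) volume c d :=
    fun hsub hcd => (hint' hsub hcd).continuousOn_mul (by fun_prop)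
  have hfirst := integral_sub_mul_midpoint_eq ham (fun t ht => hf' t (hleft ht))
    (fun t ht => hf'' t (hleft ht)) (hint' hleft ham)
  have hsecond := integral_sub_mul_midpoint_eq hmb (fun t ht => hf' t (hright ht))
    (fun t ht => hf'' t (hright ht)) (hint' hright hmb)
  rw [show (a + (a + b) / 2) / 2 = (3 * a + b) / 4 by ring] at hfirst
  rw [show ((a + b) / 2 + b) / 2 = (a + 3 * b) / 4 by ring] at hsecond
  rw [← intervalIntegral.integral_add_adjacent_intervals
      (hfcont.mono (by rwa [uIcc_of_le ham])).intervalIntegrable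
      (hfcont.mono (by rwa [uIcc_of_le hmb])).intervalIntegrable,
    ← intervalIntegral.integral_add_adjacent_intervals
      (hkernel (Icc_subset_Icc (by linarith) hmb) (by linarith))
      (hkernel (Icc_subset_Icc ham (by linarith)) (by linarith))]
  linear_combination hfirst + hsecond

theorem stmt10_general (a b : ℝ) (hab : a < b) (f f' f'' : ℝ → ℝ)
    (hf' : ∀ t ∈ Set.Icc a b, HasDerivAt f (f' t) t)
    (hf'' : ∀ t ∈ Set.Icc a b, HasDerivAt f' (f'' t) t)
    (hint : IntervalIntegrable f'' volume a b)
    (s : ℝ) (hs0 : 0 < s)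
    (p q : ℝ) (hp : 1 < p) (hpq : 1 / p + 1 / q = 1)
    (hconv : SConvexOn s (Set.Icc a b) (fun t => |f'' t| ^ q)) :
    |((1 / (b - a)) * ∫ t in a..b, f t) - (1 / 2) * (f ((3 * a + b) / 4) + f ((a + 3 * b) / 4))|
      ≤ (b - a) ^ 2 / (128 * (2 * p + 1) ^ (1 / p) * (s + 1) ^ (1 / q)) *
          ((|f'' a| ^ q + |f'' ((3 * a + b) / 4)| ^ q) ^ (1 / q)
            + 2 * (|f'' ((3 * a + b) / 4)| ^ q + |f'' ((a + 3 * b) / 4)| ^ q) ^ (1 / q)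
            + (|f'' ((a + 3 * b) / 4)| ^ q + |f'' b| ^ q) ^ (1 / q)) := by
  have hpq' : p.HolderConjugate q :=
    Real.holderConjugate_iff.2 ⟨hp, by simpa only [one_div] using hpq⟩
  have hba : 0 < b - a := sub_pos.2 hab
  set K := 2 * (2 * p + 1) ^ (1 / p) * (s + 1) ^ (1 / q) with hK
  have piece : ∀ c d w k : ℝ, 0 ≤ k → a ≤ c → c < d → d ≤ b → w ∈ Icc c d →
      (w - c) ^ (2 * p + 1) + (d - w) ^ (2 * p + 1) = k * ((b - a) / 4) ^ (2 * p + 1) →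
      d - c = k * ((b - a) / 4) →
      |∫ t in c..d, (t - w) ^ 2 / 2 * f'' t|
        ≤ k * ((b - a) / 4) ^ 3 / K * (|f'' c| ^ q + |f'' d| ^ q) ^ (1 / q) := by
    intro c d w k hk hac hcd hdb hw hX hL
    have := abs_integral_sq_div_two_mul_le hpq' hs0.le hconv ⟨hac, by linarith⟩
      ⟨by linarith, hdb⟩ hcd hw
      (hint.mono_set (by rw [uIcc_of_le hcd.le, uIcc_of_le hab.le]; exact Icc_subset_Icc hac hdb))
    rwa [hX, hL, hpq'.rpow_mul_rpow_eq_mul_pow_three hk (by linarith)] at this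
  have hzero : (0 : ℝ) ^ (2 * p + 1) = 0 := Real.zero_rpow (by linarith)
  have hleft := piece a ((3 * a + b) / 4) a 1 zero_le_one le_rfl (by linarith) (by linarith)
    (left_mem_Icc.2 (by linarith)) (by rw [sub_self, hzero]; ring_nf) (by ring)
  have hmid := piece ((3 * a + b) / 4) ((a + 3 * b) / 4) ((a + b) / 2) 2 zero_le_two (by linarith)
    (by linarith) (by linarith) ⟨by linarith, by linarith⟩ (by ring_nf) (by ring)
  have hright := piece ((a + 3 * b) / 4) b b 1 zero_le_one (by linarith) (by linarith) le_rfl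
    (right_mem_Icc.2 (by linarith)) (by rw [sub_self, hzero]; ring_nf) (by ring)
  rw [one_mul] at hleft hright
  rw [show (1 / (b - a)) * (∫ t in a..b, f t)
        - 1 / 2 * (f ((3 * a + b) / 4) + f ((a + 3 * b) / 4))
      = 1 / (b - a) * ((∫ t in a..b, f t)
        - (b - a) / 2 * (f ((3 * a + b) / 4) + f ((a + 3 * b) / 4))) by field_simp,
    integral_sub_two_point_eq hab.le hf' hf'' hint, abs_mul, abs_of_pos (one_div_pos.2 hba)]
  refine (mul_le_mul_of_nonneg_left ((abs_add_three _ _ _).trans (add_le_add_three hleft hmid hright))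
    (one_div_pos.2 hba).le).trans_eq ?_
  rw [hK]
  field_simp
  ring

theorem stmt10 (a b : ℝ) (ha : 0 ≤ a) (hab : a < b) (f f' f'' : ℝ → ℝ)
    (hf' : ∀ t ∈ Set.Icc a b, HasDerivAt f (f' t) t)
    (hf'' : ∀ t ∈ Set.Icc a b, HasDerivAt f' (f'' t) t)
    (hint : IntervalIntegrable f'' volume a b)
    (s : ℝ) (hs0 : 0 < s) (hs1 : s ≤ 1)
    (p q : ℝ) (hp : 1 < p) (hq : 1 < q) (hpq : 1 / p + 1 / q = 1)
    (hconv : SConvexOn s (Set.Icc a b) (fun t => |f'' t| ^ q)) :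
    |((1 / (b - a)) * ∫ t in a..b, f t) - (1 / 2) * (f ((3 * a + b) / 4) + f ((a + 3 * b) / 4))|
      ≤ (b - a) ^ 2 / (128 * (2 * p + 1) ^ (1 / p) * (s + 1) ^ (1 / q)) *
          ((|f'' a| ^ q + |f'' ((3 * a + b) / 4)| ^ q) ^ (1 / q)
            + 2 * (|f'' ((3 * a + b) / 4)| ^ q + |f'' ((a + 3 * b) / 4)| ^ q) ^ (1 / q)
            + (|f'' ((a + 3 * b) / 4)| ^ q + |f'' b| ^ q) ^ (1 / q)) :=
  stmt10_general a b hab f f' f'' hf' hf'' hint s hs0 p q hp hpq hconv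
end
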